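/- arXiv:2406.09310 — 4 statements merged into one kernel-verified Lean document; each statement's English description precedes it below -/
import Mathlib

section
/- Let (𝔛, τ) be a Hausdorff topological vector space admitting a sequence of continuous (not necessarily linear) operators T_N : 𝔛 → 𝔛 such that T_N(𝔛) is contained in an N-dimensional linear subspace 𝔛_N and T_N(x) → x as N → ∞ for every x ∈ 𝔛. Then 𝔛 is quasi-Polish: choosing linear isomorphisms Φ_N : 𝔛_N → ℝ^N, the countable family {Φ_N^{(i)} ∘ T_N ; N ∈ ℕ, 1 ≤ i ≤ N} of continuous real-valued functions separates points. -/
open scoped Topology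
open Filter

theorem Filter.Tendsto.eventually_ne_of_ne {α X : Type*} [TopologicalSpace X] [T2Space X]
    {l : Filter α} {f g : α → X} {a b : X} (hf : Tendsto f l (𝓝 a)) (hg : Tendsto g l (𝓝 b))
    (hab : a ≠ b) : ∀ᶠ n in l, f n ≠ g n :=
  (hf.prodMk_nhds hg).eventually (isClosed_diagonal.isOpen_compl.mem_nhds hab)

theorem exists_apply_ne_of_tendsto_id {X : Type*} [TopologicalSpace X] [T2Space X]
    {T : ℕ → X → X} (hT : ∀ x, Tendsto (fun N => T N x) atTop (𝓝 x)) {x y : X} (hxy : x ≠ y) :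
    ∃ N, T N x ≠ T N y :=
  ((hT x).eventually_ne_of_ne (hT y) hxy).exists

theorem LinearEquiv.continuous_of_finiteDimensional_codomain {𝕜 E F : Type*}
    [NontriviallyNormedField 𝕜] [CompleteSpace 𝕜]
    [AddCommGroup E] [Module 𝕜 E] [TopologicalSpace E] [T2Space E]
    [IsTopologicalAddGroup E] [ContinuousSMul 𝕜 E]
    [AddCommGroup F] [Module 𝕜 F] [TopologicalSpace F] [IsTopologicalAddGroup F]
    [ContinuousSMul 𝕜 F] [FiniteDimensional 𝕜 F] (Φ : E ≃ₗ[𝕜] F) : Continuous Φ :=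
  haveI := Φ.symm.finiteDimensional
  Φ.toLinearMap.continuous_of_finiteDimensional

theorem approxIdentity_quasiPolish_general {X : Type*} [AddCommGroup X] [Module ℝ X]
    [TopologicalSpace X] [T2Space X] [IsTopologicalAddGroup X] [ContinuousSMul ℝ X]
    (V : ℕ → Submodule ℝ X)
    (T : ℕ → X → X) (hTcont : ∀ N, Continuous (T N))
    (hTmem : ∀ N x, T N x ∈ V N)
    (hTlim : ∀ x : X, Filter.Tendsto (fun N => T N x) Filter.atTop (𝓝 x))
    (Φ : ∀ N, V N ≃ₗ[ℝ] (Fin N → ℝ)) :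
    (∀ N (i : Fin N), Continuous (fun x : X => Φ N ⟨T N x, hTmem N x⟩ i)) ∧
      ∀ x y : X, x ≠ y →
        ∃ N, ∃ i : Fin N, Φ N ⟨T N x, hTmem N x⟩ i ≠ Φ N ⟨T N y, hTmem N y⟩ i := by
  refine ⟨fun N i => (continuous_apply i).comp
    ((Φ N).continuous_of_finiteDimensional_codomain.comp ((hTcont N).subtype_mk _)),
    fun x y hxy => ?_⟩
  obtain ⟨N, hN⟩ := exists_apply_ne_of_tendsto_id hTlim hxy
  have hΦ : Φ N ⟨T N x, hTmem N x⟩ ≠ Φ N ⟨T N y, hTmem N y⟩ :=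
    (Φ N).injective.ne fun h => hN (congrArg Subtype.val h)
  obtain ⟨i, hi⟩ := Function.ne_iff.mp hΦ
  exact ⟨N, i, hi⟩

/-- A Hausdorff topological vector space admitting continuous (not necessarily
linear) finite-rank operators `T N` converging pointwise to the identity is
quasi-Polish: composing with coordinates of linear isomorphisms
`Φ N : 𝔛_N ≃ ℝ^N`, one obtains a countable separating family of continuous
real-valued functions. -/
theorem approxIdentity_quasiPolish {X : Type*} [AddCommGroup X] [Module ℝ X]
    [TopologicalSpace X] [T2Space X] [IsTopologicalAddGroup X] [ContinuousSMul ℝ X]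
    (V : ℕ → Submodule ℝ X) (hdim : ∀ N, Module.finrank ℝ (V N) = N)
    (T : ℕ → X → X) (hTcont : ∀ N, Continuous (T N))
    (hTmem : ∀ N x, T N x ∈ V N)
    (hTlim : ∀ x : X, Filter.Tendsto (fun N => T N x) Filter.atTop (𝓝 x))
    (Φ : ∀ N, V N ≃ₗ[ℝ] (Fin N → ℝ)) :
    (∀ N (i : Fin N), Continuous (fun x : X => Φ N ⟨T N x, hTmem N x⟩ i)) ∧
      ∀ x y : X, x ≠ y →
        ∃ N, ∃ i : Fin N, Φ N ⟨T N x, hTmem N x⟩ i ≠ Φ N ⟨T N y, hTmem N y⟩ i :=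
  approxIdentity_quasiPolish_general V T hTcont hTmem hTlim Φ
end

section
/- Let 𝔛 be a vector space with a sequence (f̄_n) of linear functionals separating points, endowed with the coarsest topology τ making all f̄_n continuous, and let K ⊆ 𝔛 be compact and convex. Then there exist continuous point-separating functions f_n : 𝔛 → [0, 1/n], n ∈ ℕ, such that, setting F = (f_n)_{n=1}^∞ : 𝔛 → ℓ²(ℕ), the image F(K) is a convex subset of the Hilbert cube 𝒬 ⊆ ℓ²(ℕ). -/
/-!
Rescale each `g n` so that it maps `K` into `[-1/2, 1/2]` (`g n` is bounded on the compact
`K`), then apply a continuous strictly increasing `χ : ℝ → [-1, 1]` that is the identity on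
`[-1/2, 1/2]`, and shift and scale the result into `[0, 1/(n+1)]`. Strict monotonicity of `χ`
preserves point separation, while on `K` every coordinate is an affine function of a linear
functional, so `F` is affine on the convex set `K` and `F '' K` is convex.
-/

open Real

theorem strictMono_add_comp_of_monotone {α β : Type*} [Preorder α] [AddCommMonoid β]
    [LinearOrder β] [IsOrderedCancelAddMonoid β] {a b : α → β} {ψ : β → β}
    (ha : Monotone a) (hb : Monotone b) (hab : StrictMono (a + b)) (hψ : StrictMono ψ) :
    StrictMono fun u => a u + ψ (b u) := by
  intro s u hsu
  rcases (hb hsu.le).lt_or_eq with hlt | heq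
  · exact add_lt_add_of_le_of_lt (ha hsu.le) (hψ hlt)
  · have hsum := hab hsu
    simp only [Pi.add_apply, heq] at hsum ⊢
    exact add_lt_add_left (lt_of_add_lt_add_right hsum) _

noncomputable def clampHalf (u : ℝ) : ℝ := max (-(1 / 2)) (min u (1 / 2))

@[fun_prop]
lemma continuous_clampHalf : Continuous clampHalf := by unfold clampHalf; fun_prop

lemma monotone_clampHalf : Monotone clampHalf := fun _ _ h =>
  max_le_max le_rfl (min_le_min h le_rfl)

lemma monotone_sub_clampHalf : Monotone fun u => u - clampHalf u := by
  intro s u h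
  simp only [clampHalf, max_def, min_def]
  split_ifs <;> linarith

lemma clampHalf_mem_Icc (u : ℝ) : clampHalf u ∈ Set.Icc (-(1 / 2)) (1 / 2) :=
  ⟨le_max_left _ _, max_le (by norm_num) (min_le_right _ _)⟩

lemma clampHalf_of_mem_Icc {u : ℝ} (h : u ∈ Set.Icc (-(1 / 2)) (1 / 2)) : clampHalf u = u := by
  rw [clampHalf, min_eq_left h.2, max_eq_right h.1]

/-- The paper's `χ`. -/
noncomputable def squash (u : ℝ) : ℝ := clampHalf u + arctan (u - clampHalf u) / π

lemma continuous_squash : Continuous squash := by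
  unfold squash; fun_prop

lemma strictMono_squash : StrictMono squash := by
  have hsum : clampHalf + (fun u => u - clampHalf u) = id := by
    funext u; simp
  exact strictMono_add_comp_of_monotone monotone_clampHalf monotone_sub_clampHalf
    (hsum ▸ strictMono_id) (arctan_strictMono.div_const pi_pos)

lemma squash_mem_Icc (u : ℝ) : squash u ∈ Set.Icc (-1) 1 := by
  have hc := clampHalf_mem_Icc u
  have hlo : -(1 / 2) < arctan (u - clampHalf u) / π := by
    rw [lt_div_iff₀ pi_pos]; linarith [neg_pi_div_two_lt_arctan (u - clampHalf u)]
  have hhi : arctan (u - clampHalf u) / π < 1 / 2 := by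
    rw [div_lt_iff₀ pi_pos]; linarith [arctan_lt_pi_div_two (u - clampHalf u)]
  constructor <;> unfold squash <;> linarith [hc.1, hc.2]

lemma squash_of_mem_Icc {u : ℝ} (h : u ∈ Set.Icc (-(1 / 2)) (1 / 2)) : squash u = u := by
  simp [squash, clampHalf_of_mem_Icc h]

theorem Convex.image_of_combo_eq {𝕜 E F : Type*} [Semiring 𝕜] [PartialOrder 𝕜]
    [AddCommMonoid E] [AddCommMonoid F] [Module 𝕜 E] [Module 𝕜 F] {s : Set E}
    (hs : Convex 𝕜 s) (f : E → F)
    (hf : ∀ x ∈ s, ∀ y ∈ s, ∀ a b : 𝕜, 0 ≤ a → 0 ≤ b → a + b = 1 →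
      f (a • x + b • y) = a • f x + b • f y) :
    Convex 𝕜 (f '' s) := by
  rintro _ ⟨x, hx, rfl⟩ _ ⟨y, hy, rfl⟩ a b ha hb hab
  exact ⟨a • x + b • y, hs hx hy ha hb hab, hf x hx y hy a b ha hb hab⟩

section

variable {X : Type*} [AddCommGroup X] [Module ℝ X]

/-- The paper's `f_n`, with `δ_n u = u / (2 * M n)` for a bound `M n` of `|g n|` on `K`; coordinates
are indexed from `0`, hence the bound `1 / (n + 1)`. -/
noncomputable def cubeCoord (g : ℕ → X →ₗ[ℝ] ℝ) (M : ℕ → ℝ) (n : ℕ) (x : X) : ℝ :=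
  (squash (g n x / (2 * M n)) + 1) / (2 * (n + 1))

variable {g : ℕ → X →ₗ[ℝ] ℝ} {M : ℕ → ℝ} {n : ℕ}

lemma cubeCoord_mem_Icc (x : X) : cubeCoord g M n x ∈ Set.Icc 0 (1 / ((n : ℝ) + 1)) := by
  obtain ⟨hlo, hhi⟩ := squash_mem_Icc (g n x / (2 * M n))
  have hn : (0 : ℝ) < 2 * (n + 1) := by positivity
  constructor
  · exact div_nonneg (by linarith) hn.le
  · rw [cubeCoord, div_le_div_iff₀ hn (by positivity)]
    nlinarith

lemma continuous_cubeCoord [TopologicalSpace X] (hg : Continuous (g n)) :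
    Continuous (cubeCoord g M n) :=
  ((continuous_squash.comp (hg.div_const _)).add continuous_const).div_const _

lemma cubeCoord_eq_cubeCoord_iff (hM : M n ≠ 0) {x y : X} :
    cubeCoord g M n x = cubeCoord g M n y ↔ g n x = g n y := by
  have hn : (2 * ((n : ℝ) + 1)) ≠ 0 := by positivity
  have h2M : 2 * M n ≠ 0 := mul_ne_zero two_ne_zero hM
  refine ⟨fun h => ?_, fun h => by rw [cubeCoord, cubeCoord, h]⟩
  have := strictMono_squash.injective (add_right_cancel ((div_left_inj' hn).mp h))
  exact (div_left_inj' h2M).mp this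

lemma cubeCoord_of_abs_le (hM : 0 < M n) {x : X} (hx : |g n x| ≤ M n) :
    cubeCoord g M n x = (g n x / (2 * M n) + 1) / (2 * (n + 1)) := by
  rw [cubeCoord, squash_of_mem_Icc]
  rw [Set.mem_Icc, ← abs_le, abs_div, abs_of_pos (by positivity : (0 : ℝ) < 2 * M n),
    div_le_iff₀ (by positivity)]
  linarith

lemma cubeCoord_combo (hM : 0 < M n) {x y : X} {a b : ℝ} (hab : a + b = 1)
    (hx : |g n x| ≤ M n) (hy : |g n y| ≤ M n) (hxy : |g n (a • x + b • y)| ≤ M n) :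
    cubeCoord g M n (a • x + b • y) = a * cubeCoord g M n x + b * cubeCoord g M n y := by
  rw [cubeCoord_of_abs_le hM hx, cubeCoord_of_abs_le hM hy,
    cubeCoord_of_abs_le hM hxy, map_add, map_smul, map_smul, smul_eq_mul, smul_eq_mul]
  obtain rfl : b = 1 - a := by linarith
  ring

end

/-- Let `X` be a vector space with a point-separating sequence of linear
functionals, with the coarsest topology making them continuous, and let `K` be
compact and convex. Then there is a continuous point-separating sequence
`f n : X → [0, 1/n]` such that the induced map `F : X → ℓ²(ℕ)` sends `K` onto a
convex subset of the Hilbert cube. -/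
theorem convex_image_in_Hilbert_cube {X : Type*} [AddCommGroup X] [Module ℝ X]
    [t : TopologicalSpace X]
    (g : ℕ → X →ₗ[ℝ] ℝ)
    (hgsep : ∀ x y : X, x ≠ y → ∃ n, g n x ≠ g n y)
    (ht : t = ⨅ n, TopologicalSpace.induced (g n) inferInstance)
    (K : Set X) (hK : IsCompact K) (hKconv : Convex ℝ K) :
    ∃ f : ℕ → X → ℝ,
      (∀ n, Continuous (f n)) ∧
      (∀ (n : ℕ) (x : X), f n x ∈ Set.Icc (0 : ℝ) (1 / (↑n + 1))) ∧
      (∀ x y : X, x ≠ y → ∃ n, f n x ≠ f n y) ∧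
      ∀ F : X → lp (fun _ : ℕ => ℝ) 2, (∀ x n, F x n = f n x) →
        (F '' K ⊆ {a : lp (fun _ : ℕ => ℝ) 2 | ∀ i : ℕ, a i ∈ Set.Icc (0 : ℝ) (1 / (↑i + 1))}) ∧
        Convex ℝ (F '' K) := by
  have hg : ∀ n, Continuous (g n) := fun n => ht ▸ continuous_iInf_dom continuous_induced_dom
  have hbound : ∀ n, ∃ M, 0 < M ∧ ∀ x ∈ K, |g n x| ≤ M := fun n => by
    obtain ⟨C, hC⟩ := hK.exists_bound_of_continuousOn (hg n).continuousOn
    exact ⟨max C 1, by positivity, fun x hx => (hC x hx).trans (le_max_left _ _)⟩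
  choose M hM hgM using hbound
  refine ⟨cubeCoord g M, fun n => continuous_cubeCoord (hg n), fun n x => cubeCoord_mem_Icc x,
    fun x y hxy => ?_, fun F hF => ⟨?_, ?_⟩⟩
  · obtain ⟨n, hn⟩ := hgsep x y hxy
    exact ⟨n, mt (cubeCoord_eq_cubeCoord_iff (hM n).ne').mp hn⟩
  · rintro _ ⟨x, -, rfl⟩ i
    exact hF x i ▸ cubeCoord_mem_Icc x
  · refine hKconv.image_of_combo_eq F fun x hx y hy a b ha hb hab => lp.ext (funext fun i => ?_)
    simp only [lp.coeFn_add, lp.coeFn_smul, Pi.add_apply, Pi.smul_apply, smul_eq_mul, hF]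
    exact cubeCoord_combo (hM i) hab (hgM i x hx) (hgM i y hy)
      (hgM i _ (hKconv hx hy ha hb hab))
end

section
/- Let (𝔛, τ) be a quasi-Polish space with injection map F : 𝔛 → ℓ²(ℕ). Let σ : V → V (V = ℓ²(ℕ)) be continuous, with bounded range, satisfying the separating property. Then the set 𝔑_{F,σ}(𝔛) of quasi-Polish scalar neural networks x ↦ Σ_{j=1}^J ⟨φ_j, σ(A_j F(x) + b_j)⟩ (J ∈ ℕ, φ_j ∈ V', A_j ∈ ℒ(V), b_j ∈ V) is dense in C(𝔛) for the topology of uniform convergence on compact sets: for every continuous g : 𝔛 → ℝ, compact K ⊆ 𝔛, and ε > 0, there exists 𝒢 ∈ 𝔑_{F,σ}(𝔛) with sup_{x∈K} |𝒢(x) − g(x)| < ε. -/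
/-!
Since `F` is injective, the functions `x ↦ exp (ℓ (F x))`, `ℓ ∈ V'`, form a multiplicatively
closed family separating the points of a compact set `K`, so by Stone–Weierstrass their span is
dense in `C(K)`. The separating property yields `φ ∈ V'` and `e ∈ V` for which the scalar
profile `h u = φ (σ (u • e))` tends to `1` at `+∞` and to `0` at `-∞`. Staircase sums
`∑ cₖ h (λ u + βₖ)` of such a sigmoid approximate any continuous function of one variable
uniformly on an interval, and a ridge function `x ↦ h (α ℓ (F x) + β)` is a single neuron with
`A = α ℓ(·) e` and `b = β e`. Hence every `exp ∘ ℓ ∘ F`, and so every continuous function on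
`K`, is a uniform limit of networks.
-/

open Filter Topology Set Finset Bornology

theorem SeparatingDual.exists_eq_one_eq_zero_of_notMem_span_singleton {W : Type*}
    [AddCommGroup W] [TopologicalSpace W] [Module ℝ W] [SeparatingDual ℝ W] {a b : W}
    (hab : a ∉ ℝ ∙ b) : ∃ φ : StrongDual ℝ W, φ a = 1 ∧ φ b = 0 := by
  by_cases hb : b = 0
  · subst hb
    obtain ⟨φ, hφ⟩ := SeparatingDual.exists_eq_one (R := ℝ) (x := a) (by simpa using hab)
    exact ⟨φ, hφ, map_zero φ⟩
  obtain ⟨f, hf⟩ := SeparatingDual.exists_eq_one (R := ℝ) hb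
  -- `g` is one on the component of `a` transverse to `b`; subtracting `g b • f` kills `b`.
  have hc : a - f a • b ≠ 0 := fun h =>
    hab (Submodule.mem_span_singleton.2 ⟨f a, (sub_eq_zero.1 h).symm⟩)
  obtain ⟨g, hg⟩ := SeparatingDual.exists_eq_one (R := ℝ) hc
  refine ⟨g - g b • f, ?_, by simp [hf]⟩
  simpa [hf, mul_comm] using hg

theorem tendsto_atBot_smul_iff_neg {E α : Type*} [AddCommGroup E] [Module ℝ E]
    {σ : E → α} {e : E} {l : Filter α} :
    Tendsto (fun u : ℝ => σ (u • -e)) atTop l ↔ Tendsto (fun u : ℝ => σ (u • e)) atBot l := by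
  simp_rw [smul_neg, ← neg_smul]
  exact tendsto_comp_neg_atTop_iff (f := fun u : ℝ => σ (u • e))

theorem exists_tendsto_atTop_atBot_of_dual {E W : Type*} [AddCommGroup E] [TopologicalSpace E]
    [Module ℝ E] [TopologicalSpace W] {σ : E → W} {ψ : StrongDual ℝ E} (hψ : ψ ≠ 0)
    {uP uM : W} (hP : ∀ x, 0 < ψ x → Tendsto (fun u : ℝ => σ (u • x)) atTop (𝓝 uP))
    (hM : ∀ x, ψ x < 0 → Tendsto (fun u : ℝ => σ (u • x)) atTop (𝓝 uM)) :
    ∃ e : E, Tendsto (fun u : ℝ => σ (u • e)) atTop (𝓝 uP) ∧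
      Tendsto (fun u : ℝ => σ (u • e)) atBot (𝓝 uM) := by
  obtain ⟨e, he⟩ : ∃ e, 0 < ψ e := by
    obtain ⟨x, hx⟩ := DFunLike.ne_iff.1 hψ
    rcases (Ne.lt_or_gt hx : ψ x < 0 ∨ 0 < ψ x) with h | h
    · exact ⟨-x, by simpa using h⟩
    · exact ⟨x, h⟩
  exact ⟨e, hP e he, tendsto_atBot_smul_iff_neg.1 (hM _ (by simpa using he))⟩

theorem exists_dual_comp_tendsto_of_notMem_span_singleton {E W : Type*} [AddCommGroup E]
    [Module ℝ E] [AddCommGroup W] [TopologicalSpace W] [Module ℝ W] [SeparatingDual ℝ W]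
    {σ : E → W} {e : E} {a b : W}
    (htop : Tendsto (fun u : ℝ => σ (u • e)) atTop (𝓝 a))
    (hbot : Tendsto (fun u : ℝ => σ (u • e)) atBot (𝓝 b)) (hab : a ∉ ℝ ∙ b) :
    ∃ φ : StrongDual ℝ W, Tendsto (fun u : ℝ => φ (σ (u • e))) atTop (𝓝 1) ∧
      Tendsto (fun u : ℝ => φ (σ (u • e))) atBot (𝓝 0) := by
  obtain ⟨φ, hφa, hφb⟩ := SeparatingDual.exists_eq_one_eq_zero_of_notMem_span_singleton hab
  exact ⟨φ, hφa ▸ (φ.continuous.tendsto a).comp htop, hφb ▸ (φ.continuous.tendsto b).comp hbot⟩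

section SeparatingProperty

variable {E W : Type*} [AddCommGroup E] [TopologicalSpace E] [Module ℝ E]
  [AddCommGroup W] [TopologicalSpace W] [Module ℝ W]

def HasSeparatingProperty (σ : E → W) : Prop :=
  ∃ ψ : StrongDual ℝ E, ψ ≠ 0 ∧ ∃ uP uM u0 : W,
    (uP ∉ Submodule.span ℝ {u0, uM} ∨ uM ∉ Submodule.span ℝ {u0, uP}) ∧
    (∀ x, 0 < ψ x → Tendsto (fun lam : ℝ => σ (lam • x)) atTop (𝓝 uP)) ∧
    (∀ x, ψ x < 0 → Tendsto (fun lam : ℝ => σ (lam • x)) atTop (𝓝 uM)) ∧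
    (∀ x, ψ x = 0 → Tendsto (fun lam : ℝ => σ (lam • x)) atTop (𝓝 u0))

variable [SeparatingDual ℝ W]

theorem HasSeparatingProperty.exists_dual_comp_tendsto_one_zero {σ : E → W}
    (hσ : HasSeparatingProperty σ) :
    ∃ (φ : StrongDual ℝ W) (e : E), Tendsto (fun u : ℝ => φ (σ (u • e))) atTop (𝓝 1) ∧
      Tendsto (fun u : ℝ => φ (σ (u • e))) atBot (𝓝 0) := by
  obtain ⟨ψ, hψ, uP, uM, u0, hspan, hP, hM, -⟩ := hσ
  obtain ⟨e, htop, hbot⟩ := exists_tendsto_atTop_atBot_of_dual hψ hP hM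
  have hsub (b : W) : ℝ ∙ b ≤ Submodule.span ℝ {u0, b} :=
    Submodule.span_mono (subset_insert u0 {b})
  rcases hspan with h | h
  · obtain ⟨φ, hφ⟩ := exists_dual_comp_tendsto_of_notMem_span_singleton htop hbot
      fun h' => h (hsub _ h')
    exact ⟨φ, e, hφ⟩
  · obtain ⟨φ, hφ⟩ := exists_dual_comp_tendsto_of_notMem_span_singleton
      (tendsto_atBot_smul_iff_neg.2 hbot) (tendsto_atBot_smul_iff_neg.1 (by simpa using htop))
      fun h' => h (hsub _ h')
    exact ⟨φ, -e, hφ⟩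

end SeparatingProperty

theorem exists_mem_Icc_succ_of_mem_Icc {α : Type*} [LinearOrder α] (t : ℕ → α) {n : ℕ} {u : α}
    (hu : u ∈ Icc (t 0) (t (n + 1))) : ∃ j ≤ n, u ∈ Icc (t j) (t (j + 1)) := by
  induction n with
  | zero => exact ⟨0, le_rfl, hu⟩
  | succ n ih =>
    rcases le_or_gt u (t (n + 1)) with h | h
    · obtain ⟨j, hj, hju⟩ := ih ⟨hu.1, h⟩
      exact ⟨j, by omega, hju⟩
    · exact ⟨n + 1, le_rfl, h.le, hu.2⟩

def stepHeights (y : ℕ → ℝ) : ℕ → ℝ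
  | 0 => y 0
  | k + 1 => y (k + 1) - y k

theorem sum_range_succ_stepHeights (y : ℕ → ℝ) (j : ℕ) :
    ∑ k ∈ range (j + 1), stepHeights y k = y j := by
  induction j with
  | zero => simp [stepHeights]
  | succ j ih => rw [sum_range_succ, ih, stepHeights]; ring

theorem abs_stepHeights_le {y : ℕ → ℝ} {B : ℝ} {n : ℕ} (hy : ∀ k ≤ n, |y k| ≤ B) {k : ℕ}
    (hk : k ≤ n) : |stepHeights y k| ≤ 2 * B := by
  cases k with
  | zero => simp only [stepHeights]; linarith [hy 0 hk, abs_nonneg (y 0)]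
  | succ k =>
    exact (abs_sub _ _).trans (by linarith [hy k (by omega), hy (k + 1) hk])

/-- The weights `wₖ` are close to the Heaviside profile `1_{k ≤ j}` except at the single index
`j + 1`, where the step height is small instead. -/
theorem abs_sum_mul_sub_sum_le (d w : ℕ → ℝ) {m j : ℕ} (hjm : j + 1 < m) {B C η ε₁ : ℝ}
    (hd : ∀ k < m, |d k| ≤ B) (hdj : |d (j + 1)| ≤ ε₁) (hwj : |w (j + 1)| ≤ C)
    (hon : ∀ k ≤ j, |w k - 1| ≤ η) (hoff : ∀ k < m, j + 1 < k → |w k| ≤ η) :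
    |∑ k ∈ range m, d k * w k - ∑ k ∈ range (j + 1), d k| ≤ ε₁ * C + m * (B * η) := by
  set θ : ℕ → ℝ := fun k => if k ≤ j then 1 else 0
  have hθ : ∑ k ∈ range (j + 1), d k = ∑ k ∈ range m, d k * θ k := by
    simp only [θ, mul_ite, mul_one, mul_zero, sum_ite, sum_const_zero, add_zero]
    congr 1
    ext k
    simp only [mem_filter, Finset.mem_range]
    omega
  have hBη : 0 ≤ B * η :=
    mul_nonneg ((abs_nonneg _).trans (hd 0 (by omega))) ((abs_nonneg _).trans (hon 0 j.zero_le))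
  have hrest : ∀ k ∈ (range m).erase (j + 1), |d k * (w k - θ k)| ≤ B * η := by
    intro k hk
    have hkm : k < m := Finset.mem_range.1 (Finset.mem_of_mem_erase hk)
    rw [abs_mul]
    refine mul_le_mul (hd k hkm) ?_ (abs_nonneg _) ((abs_nonneg _).trans (hd k hkm))
    by_cases hkj : k ≤ j
    · simpa [θ, hkj] using hon k hkj
    · have : j + 1 < k := by have := Finset.ne_of_mem_erase hk; omega
      simpa [θ, hkj] using hoff k hkm this
  calc |∑ k ∈ range m, d k * w k - ∑ k ∈ range (j + 1), d k|
      = |∑ k ∈ range m, d k * (w k - θ k)| := by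
        rw [hθ, ← sum_sub_distrib]; simp only [mul_sub]
    _ ≤ ∑ k ∈ range m, |d k * (w k - θ k)| := abs_sum_le_sum_abs _ _
    _ = |d (j + 1) * (w (j + 1) - θ (j + 1))| +
          ∑ k ∈ (range m).erase (j + 1), |d k * (w k - θ k)| :=
        (add_sum_erase _ _ (Finset.mem_range.2 hjm)).symm
    _ ≤ ε₁ * C + ((range m).erase (j + 1)).card • (B * η) := by
        gcongr
        · simpa [θ, abs_mul] using
            mul_le_mul hdj hwj (abs_nonneg _) ((abs_nonneg _).trans hdj)
        · exact sum_le_card_nsmul _ _ _ hrest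
    _ ≤ ε₁ * C + m * (B * η) := by
        rw [nsmul_eq_mul]
        gcongr
        exact_mod_cast (card_erase_le).trans (card_range m).le

theorem exists_tails_of_tendsto {h : ℝ → ℝ} (htop : Tendsto h atTop (𝓝 1))
    (hbot : Tendsto h atBot (𝓝 0)) {η : ℝ} (hη : 0 < η) :
    ∃ R, 0 ≤ R ∧ (∀ v, R ≤ v → |h v - 1| ≤ η) ∧ ∀ v, v ≤ -R → |h v| ≤ η := by
  obtain ⟨R₁, h₁⟩ := eventually_atTop.1 (htop.eventually (Metric.closedBall_mem_nhds 1 hη))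
  obtain ⟨R₂, h₂⟩ := eventually_atBot.1 (hbot.eventually (Metric.closedBall_mem_nhds 0 hη))
  refine ⟨max 0 (max R₁ (-R₂)), le_max_left _ _, fun v hv => ?_, fun v hv => ?_⟩
  · simpa [Real.dist_eq] using h₁ v (by simp only [max_le_iff] at hv; exact hv.2.1)
  · simpa [Real.dist_eq] using h₂ v (by simp only [le_neg, max_le_iff] at hv ⊢; linarith)

theorem abs_staircase_sub_le {h : ℝ → ℝ} {C η R : ℝ} (hC : ∀ v, |h v| ≤ C)
    (htop : ∀ v, R ≤ v → |h v - 1| ≤ η) (hbot : ∀ v, v ≤ -R → |h v| ≤ η)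
    {t : ℕ → ℝ} {s lam : ℝ} (hs : 0 < s) (ht : ∀ k, t (k + 1) = t k + s)
    (hlam : 0 ≤ lam) (hlamR : lam * s = 2 * R) {χ : ℝ → ℝ} {n : ℕ} {B ε₁ : ℝ}
    (hB : ∀ v ∈ Icc (t 0) (t (n + 1)), |χ v| ≤ B)
    (hosc : ∀ u ∈ Icc (t 0) (t (n + 1)), ∀ v ∈ Icc (t 0) (t (n + 1)),
      |u - v| ≤ s → |χ u - χ v| ≤ ε₁)
    {u : ℝ} (hu : u ∈ Icc (t 0) (t (n + 1))) :
    |∑ k ∈ range (n + 2), stepHeights (χ ∘ t) k * h (lam * u + lam * (s / 2 - t k)) - χ u| ≤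
      ε₁ * C + (n + 2 : ℕ) * (2 * B * η) + ε₁ := by
  have hmono : Monotone t := monotone_nat_of_le_succ fun k => by rw [ht]; linarith
  have hmem {k : ℕ} (hk : k ≤ n + 1) : t k ∈ Icc (t 0) (t (n + 1)) :=
    ⟨hmono k.zero_le, hmono hk⟩
  obtain ⟨j, hjn, hju⟩ := exists_mem_Icc_succ_of_mem_Icc t hu
  -- The step at `t k - s / 2` is switched on (`k ≤ j`) or off (`j + 1 < k`) at `u`.
  have hon : ∀ k ≤ j, |h (lam * u + lam * (s / 2 - t k)) - 1| ≤ η := fun k hk =>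
    htop _ (by nlinarith [mul_nonneg hlam (sub_nonneg.2 ((hmono hk).trans hju.1))])
  have hoff : ∀ k < n + 2, j + 1 < k → |h (lam * u + lam * (s / 2 - t k))| ≤ η := by
    intro k _ hk
    have : t (j + 1) + s ≤ t k := (ht (j + 1)).symm.le.trans (hmono hk)
    have hgap := mul_nonneg hlam (sub_nonneg.2 (hju.2.trans (le_sub_iff_add_le.2 this)))
    exact hbot _ (by nlinarith)
  have hsum := abs_sum_mul_sub_sum_le (stepHeights (χ ∘ t))
    (fun k => h (lam * u + lam * (s / 2 - t k))) (j := j) (by omega)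
    (fun k hk => abs_stepHeights_le (fun i hi => hB _ (hmem hi)) (by omega))
    (hosc _ (hmem (by omega)) _ (hmem (by omega)) (by rw [ht, add_sub_cancel_left, abs_of_pos hs]))
    (hC _) hon hoff
  rw [sum_range_succ_stepHeights] at hsum
  have hlast : |χ (t j) - χ u| ≤ ε₁ :=
    hosc _ (hmem (by omega)) _ hu (by
      rw [abs_sub_comm, abs_of_nonneg (sub_nonneg.2 hju.1)]; linarith [ht j, hju.2])
  calc _ ≤ |∑ k ∈ range (n + 2), stepHeights (χ ∘ t) k * h (lam * u + lam * (s / 2 - t k))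
          - (χ ∘ t) j| + |χ (t j) - χ u| := abs_sub_le _ _ _
    _ ≤ _ := add_le_add hsum hlast

theorem exists_sum_mul_comp_affine_near {h : ℝ → ℝ} {C : ℝ} (hC : ∀ v, |h v| ≤ C)
    (htop : Tendsto h atTop (𝓝 1)) (hbot : Tendsto h atBot (𝓝 0)) {χ : ℝ → ℝ} {a b : ℝ}
    (hχ : ContinuousOn χ (Icc a b)) (hab : a < b) {ε : ℝ} (hε : 0 < ε) :
    ∃ (m : ℕ) (c α β : ℕ → ℝ), ∀ u ∈ Icc a b,
      |∑ k ∈ range m, c k * h (α k * u + β k) - χ u| < ε := by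
  have hC0 : 0 ≤ C := (abs_nonneg _).trans (hC 0)
  obtain ⟨B, hB⟩ := isCompact_Icc.exists_bound_of_continuousOn hχ
  have hB0 : 0 ≤ B := (norm_nonneg _).trans (hB a ⟨le_rfl, hab.le⟩)
  set ε₁ := ε / (2 * (C + 1))
  obtain ⟨δ, hδ, hχδ⟩ := Metric.uniformContinuousOn_iff.1
    (isCompact_Icc.uniformContinuousOn_of_continuous hχ) ε₁ (by positivity)
  obtain ⟨n, hn⟩ := exists_nat_gt ((b - a) / δ)
  set s := (b - a) / (n + 1)
  have hs : 0 < s := div_pos (sub_pos.2 hab) (by positivity)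
  have hsδ : s < δ := by
    rw [div_lt_iff₀ (by positivity)]
    rw [div_lt_iff₀ hδ] at hn
    linarith
  set t : ℕ → ℝ := fun k => a + k * s
  have ht0 : t 0 = a := by simp [t]
  have htn : t (n + 1) = b := by
    simp only [t, s]; push_cast; field_simp; ring
  set η := ε / (2 * ((n + 2 : ℕ) * (2 * B) + 1))
  obtain ⟨R, hR, hRtop, hRbot⟩ := exists_tails_of_tendsto htop hbot (η := η) (by positivity)
  refine ⟨n + 2, stepHeights (χ ∘ t), fun _ => 2 * R / s, fun k => 2 * R / s * (s / 2 - t k),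
    fun u hu => ?_⟩
  have hest := abs_staircase_sub_le hC hRtop hRbot hs (t := t) (fun k => by simp [t]; ring)
    (by positivity) (div_mul_cancel₀ _ hs.ne') (n := n) (B := B) (ε₁ := ε₁)
    (by rw [ht0, htn]; exact fun v hv => by simpa using hB v hv)
    (by
      rw [ht0, htn]
      refine fun x hx y hy hxy => (hχδ x hx y hy ?_).le
      rw [Real.dist_eq]; linarith)
    (by rwa [ht0, htn])
  refine hest.trans_lt ?_
  have hε₁ : ε₁ * C + ε₁ = ε / 2 := by simp only [ε₁]; field_simp
  have hη : ((n + 2 : ℕ) : ℝ) * (2 * B * η) < ε / 2 := by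
    simp only [η]
    rw [← mul_assoc, mul_div_assoc', div_lt_iff₀ (by positivity)]
    nlinarith
  linarith

theorem Subalgebra.toSubmodule_adjoin_range_monoidHom {R A M : Type*} [CommSemiring R]
    [Semiring A] [Algebra R A] [Monoid M] (f : M →* A) :
    Subalgebra.toSubmodule (Algebra.adjoin R (range f)) = Submodule.span R (range f) := by
  rw [Algebra.adjoin_eq_span, MonoidHom.mclosure_range, MonoidHom.coe_mrange]

theorem ContinuousMap.mem_topologicalClosure_iff_forall_exists_abs_sub_lt {X : Type*}
    [TopologicalSpace X] [CompactSpace X] {S : Submodule ℝ C(X, ℝ)} {f : C(X, ℝ)} :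
    f ∈ S.topologicalClosure ↔ ∀ ε > 0, ∃ G ∈ S, ∀ x, |G x - f x| < ε := by
  rw [← SetLike.mem_coe, Submodule.topologicalClosure_coe, Metric.mem_closure_iff]
  refine forall₂_congr fun ε hε => exists_congr fun G => and_congr_right fun _ => ?_
  simp [ContinuousMap.dist_lt_iff hε, Real.dist_eq, abs_sub_comm]

section Networks

variable {X E W : Type*} [TopologicalSpace X] [NormedAddCommGroup E] [NormedSpace ℝ E]
  [NormedAddCommGroup W] [NormedSpace ℝ W]

/-- The span of single neurons is the set of networks `x ↦ ∑ⱼ φⱼ (σ (Aⱼ (F x) + bⱼ))`; only the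
continuous ones are kept, so that density can be stated in `C(X, ℝ)`. -/
def scalarNetworks (F : X → E) (σ : E → W) : Submodule ℝ C(X, ℝ) :=
  Submodule.span ℝ {G | ∃ (A : E →L[ℝ] E) (b : E) (φ : StrongDual ℝ W),
    ∀ x, G x = φ (σ (A (F x) + b))}

theorem exists_sum_eq_of_mem_scalarNetworks {F : X → E} {σ : E → W} {G : C(X, ℝ)}
    (hG : G ∈ scalarNetworks F σ) :
    ∃ (J : ℕ) (φ : Fin J → StrongDual ℝ W) (A : Fin J → E →L[ℝ] E) (b : Fin J → E),
      ∀ x, G x = ∑ j, φ j (σ (A j (F x) + b j)) := by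
  obtain ⟨J, c, g, rfl⟩ := Submodule.mem_span_set'.1 hG
  choose A b φ hg using fun j => (g j).2
  exact ⟨J, fun j => c j • φ j, A, b, fun x => by simp [hg]⟩

theorem mem_topologicalClosure_scalarNetworks_of_ridge [CompactSpace X] {F : X → E}
    (hF : Continuous F) {σ : E → W} (hσc : Continuous σ) (hσb : IsBounded (range σ))
    {φ : StrongDual ℝ W} {e : E} (htop : Tendsto (fun u : ℝ => φ (σ (u • e))) atTop (𝓝 1))
    (hbot : Tendsto (fun u : ℝ => φ (σ (u • e))) atBot (𝓝 0)) (ℓ : StrongDual ℝ E)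
    {χ : ℝ → ℝ} (hχ : Continuous χ) {G : C(X, ℝ)} (hG : ∀ x, G x = χ (ℓ (F x))) :
    G ∈ (scalarNetworks F σ).topologicalClosure := by
  rw [ContinuousMap.mem_topologicalClosure_iff_forall_exists_abs_sub_lt]
  intro ε hε
  obtain ⟨r, hr, hsub⟩ :=
    (isCompact_range (ℓ.continuous.comp hF)).isBounded.subset_closedBall_lt 0 0
  rw [Real.closedBall_eq_Icc] at hsub
  obtain ⟨Cσ, hCσ⟩ := hσb.exists_norm_le
  have hφσ (v : ℝ) : |φ (σ (v • e))| ≤ ‖φ‖ * Cσ :=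
    (φ.le_opNorm _).trans (by gcongr; exact hCσ _ ⟨_, rfl⟩)
  obtain ⟨m, c, α, β, happrox⟩ := exists_sum_mul_comp_affine_near hφσ htop hbot
    hχ.continuousOn (by linarith : 0 - r < 0 + r) hε
  let N (k : ℕ) : C(X, ℝ) := ⟨fun x => φ (σ ((α k * ℓ (F x) + β k) • e)), by fun_prop⟩
  refine ⟨∑ k ∈ range m, c k • N k, sum_mem fun k _ => Submodule.smul_mem _ _
    (Submodule.subset_span ⟨α k • ℓ.smulRight e, β k • e, φ, fun x => ?_⟩), fun x => ?_⟩
  · simp [N, add_smul, smul_smul]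
  · simpa [N, hG] using happrox _ (hsub ⟨x, rfl⟩)

noncomputable def expCompDual (F : C(X, E)) : Multiplicative (StrongDual ℝ E) →* C(X, ℝ) where
  toFun ℓ := ⟨fun x => Real.exp (ℓ.toAdd (F x)), by fun_prop⟩
  map_one' := by ext; simp
  map_mul' ℓ ℓ' := by ext; simp [Real.exp_add]

theorem separatesPoints_adjoin_range_expCompDual {F : C(X, E)} (hF : Function.Injective F) :
    (Algebra.adjoin ℝ (range (expCompDual F))).SeparatesPoints := by
  intro x y hxy
  obtain ⟨ℓ, hℓ⟩ := SeparatingDual.exists_separating_of_ne (R := ℝ) (hF.ne hxy)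
  exact ⟨_, ⟨_, Algebra.subset_adjoin ⟨Multiplicative.ofAdd ℓ, rfl⟩, rfl⟩,
    by simpa [expCompDual] using hℓ⟩

theorem topologicalClosure_scalarNetworks_eq_top [CompactSpace X] {F : C(X, E)}
    (hF : Function.Injective F) {σ : E → W} (hσc : Continuous σ) (hσb : IsBounded (range σ))
    (hσs : HasSeparatingProperty σ) : (scalarNetworks F σ).topologicalClosure = ⊤ := by
  obtain ⟨φ, e, htop, hbot⟩ := hσs.exists_dual_comp_tendsto_one_zero
  set A := Algebra.adjoin ℝ (range (expCompDual F))
  have hA : (A : Set C(X, ℝ)) ⊆ (scalarNetworks F σ).topologicalClosure := by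
    change ((Subalgebra.toSubmodule A : Submodule ℝ C(X, ℝ)) : Set C(X, ℝ)) ⊆ _
    rw [Subalgebra.toSubmodule_adjoin_range_monoidHom]
    refine Submodule.span_le.2 ?_
    rintro _ ⟨ℓ, rfl⟩
    exact mem_topologicalClosure_scalarNetworks_of_ridge F.continuous hσc hσb htop hbot
      ℓ.toAdd Real.continuous_exp fun x => rfl
  refine eq_top_iff.2 fun f _ => closure_minimal hA (Submodule.isClosed_topologicalClosure _) ?_
  rw [← Subalgebra.topologicalClosure_coe,
    ContinuousMap.subalgebra_topologicalClosure_eq_top_of_separatesPoints A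
      (separatesPoints_adjoin_range_expCompDual hF)]
  trivial

end Networks

theorem quasiPolish_scalar_UAT_general {X : Type*} [TopologicalSpace X]
    (f : ℕ → X → ℝ)
    (hsep : ∀ x y : X, x ≠ y → ∃ i, f i x ≠ f i y)
    (F : X → lp (fun _ : ℕ => ℝ) 2)
    (hF : ∀ x i, F x i = f i x) (hFcont : Continuous F)
    (σ : lp (fun _ : ℕ => ℝ) 2 → lp (fun _ : ℕ => ℝ) 2)
    (hσcont : Continuous σ)
    (hσbdd : Bornology.IsBounded (Set.range σ))
    (hσsep : ∃ ψ : lp (fun _ : ℕ => ℝ) 2 →L[ℝ] ℝ, ψ ≠ 0 ∧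
      ∃ uP uM u0 : lp (fun _ : ℕ => ℝ) 2,
        (uP ∉ Submodule.span ℝ {u0, uM} ∨ uM ∉ Submodule.span ℝ {u0, uP}) ∧
        (∀ x, 0 < ψ x →
          Filter.Tendsto (fun lam : ℝ => σ (lam • x)) Filter.atTop (𝓝 uP)) ∧
        (∀ x, ψ x < 0 →
          Filter.Tendsto (fun lam : ℝ => σ (lam • x)) Filter.atTop (𝓝 uM)) ∧
        (∀ x, ψ x = 0 →
          Filter.Tendsto (fun lam : ℝ => σ (lam • x)) Filter.atTop (𝓝 u0))) :
    ∀ (g : X → ℝ), Continuous g → ∀ K : Set X, IsCompact K → ∀ ε : ℝ, 0 < ε →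
      ∃ (J : ℕ) (φ : Fin J → (lp (fun _ : ℕ => ℝ) 2 →L[ℝ] ℝ))
        (A : Fin J → (lp (fun _ : ℕ => ℝ) 2 →L[ℝ] lp (fun _ : ℕ => ℝ) 2))
        (b : Fin J → lp (fun _ : ℕ => ℝ) 2),
        ∀ x ∈ K, |(∑ j, φ j (σ (A j (F x) + b j))) - g x| < ε := by
  intro g hg K hK ε hε
  have : CompactSpace K := isCompact_iff_compactSpace.1 hK
  have hFinj : Function.Injective F := fun x y hxy => by
    by_contra hne
    obtain ⟨i, hi⟩ := hsep x y hne
    exact hi (by rw [← hF x i, ← hF y i, hxy])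
  let FK : C(K, lp (fun _ : ℕ => ℝ) 2) := ⟨fun x => F x, by fun_prop⟩
  have hdense := topologicalClosure_scalarNetworks_eq_top (F := FK)
    (hFinj.comp Subtype.val_injective) hσcont hσbdd hσsep
  have hgK : (⟨fun x => g x, by fun_prop⟩ : C(K, ℝ)) ∈ (scalarNetworks FK σ).topologicalClosure :=
    hdense ▸ Submodule.mem_top
  obtain ⟨G, hG, hGg⟩ :=
    ContinuousMap.mem_topologicalClosure_iff_forall_exists_abs_sub_lt.1 hgK ε hε
  obtain ⟨J, φ, A, b, hGeq⟩ := exists_sum_eq_of_mem_scalarNetworks hG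
  exact ⟨J, φ, A, b, fun x hx => by simpa [FK, hGeq] using hGg ⟨x, hx⟩⟩

/-- Universal approximation for quasi-Polish scalar neural networks: if `X` is
quasi-Polish with injection `F : X → ℓ²(ℕ)` and the activation `σ : V → V`
(`V = ℓ²(ℕ)`) is continuous with bounded range and satisfies the separating
property, then networks `x ↦ ∑ⱼ ⟨φⱼ, σ(Aⱼ F x + bⱼ)⟩` are dense in `C(X)` for
uniform convergence on compacts. -/
theorem quasiPolish_scalar_UAT {X : Type*} [TopologicalSpace X]
    (f : ℕ → X → ℝ)
    (hcont : ∀ i, Continuous (f i))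
    (hrange : ∀ (i : ℕ) (x : X), f i x ∈ Set.Icc (0 : ℝ) (1 / (↑i + 1)))
    (hsep : ∀ x y : X, x ≠ y → ∃ i, f i x ≠ f i y)
    (F : X → lp (fun _ : ℕ => ℝ) 2)
    (hF : ∀ x i, F x i = f i x) (hFcont : Continuous F)
    (σ : lp (fun _ : ℕ => ℝ) 2 → lp (fun _ : ℕ => ℝ) 2)
    (hσcont : Continuous σ)
    (hσbdd : Bornology.IsBounded (Set.range σ))
    (hσsep : ∃ ψ : lp (fun _ : ℕ => ℝ) 2 →L[ℝ] ℝ, ψ ≠ 0 ∧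
      ∃ uP uM u0 : lp (fun _ : ℕ => ℝ) 2,
        (uP ∉ Submodule.span ℝ {u0, uM} ∨ uM ∉ Submodule.span ℝ {u0, uP}) ∧
        (∀ x, 0 < ψ x →
          Filter.Tendsto (fun lam : ℝ => σ (lam • x)) Filter.atTop (𝓝 uP)) ∧
        (∀ x, ψ x < 0 →
          Filter.Tendsto (fun lam : ℝ => σ (lam • x)) Filter.atTop (𝓝 uM)) ∧
        (∀ x, ψ x = 0 →
          Filter.Tendsto (fun lam : ℝ => σ (lam • x)) Filter.atTop (𝓝 u0))) :
    ∀ (g : X → ℝ), Continuous g → ∀ K : Set X, IsCompact K → ∀ ε : ℝ, 0 < ε →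
      ∃ (J : ℕ) (φ : Fin J → (lp (fun _ : ℕ => ℝ) 2 →L[ℝ] ℝ))
        (A : Fin J → (lp (fun _ : ℕ => ℝ) 2 →L[ℝ] lp (fun _ : ℕ => ℝ) 2))
        (b : Fin J → lp (fun _ : ℕ => ℝ) 2),
        ∀ x ∈ K, |(∑ j, φ j (σ (A j (F x) + b j))) - g x| < ε :=
  quasiPolish_scalar_UAT_general f hsep F hF hFcont σ hσcont hσbdd hσsep
end

section
/- Let (𝔛, τ) be a Tychonoff (completely regular Hausdorff) topological space. Suppose there exists a family Φ = ⋃_{r∈ℕ} Φ^{(r)}, with Φ^{(r)} = {φ^{(r)}(·, θ) ; θ ∈ Θ^{(r)}} ⊆ C(𝔛) and Θ^{(r)} ⊆ ℝ^r nonempty, such that: (i) Φ is dense in C(𝔛) for the topology of uniform convergence on compact sets (the Universal Approximation Property), and (ii) for each r, the map Θ^{(r)} → C(𝔛), θ ↦ φ^{(r)}(·, θ), is continuous. Then (𝔛, τ) is quasi-Polish. -/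
/-- Obstruction result: if a Tychonoff space `X` admits a family
`Φ = ⋃_r {φ⁽ʳ⁾(·,θ) : θ ∈ Θ⁽ʳ⁾}` of continuous functions, parametrized by
finitely many real parameters, which is dense in `C(X)` for uniform convergence
on compacts (universal approximation property) and depends continuously on its
parameters, then `X` is quasi-Polish. -/
theorem tychonoff_UAP_implies_quasiPolish {X : Type*} [TopologicalSpace X]
    [T2Space X] [CompletelyRegularSpace X]
    (Θ : (r : ℕ) → Set (Fin r → ℝ)) (hΘ : ∀ r, (Θ r).Nonempty)
    (φ : (r : ℕ) → (Fin r → ℝ) → X → ℝ)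
    (hφcont : ∀ r, ∀ θ ∈ Θ r, Continuous (φ r θ))
    (hUAP : ∀ (g : X → ℝ), Continuous g → ∀ K : Set X, IsCompact K →
      ∀ ε : ℝ, 0 < ε → ∃ r, ∃ θ ∈ Θ r, ∀ x ∈ K, |g x - φ r θ x| < ε)
    (hparam : ∀ r, ∀ θ₀ ∈ Θ r, ∀ K : Set X, IsCompact K → ∀ ε : ℝ, 0 < ε →
      ∃ δ : ℝ, 0 < δ ∧ ∀ θ ∈ Θ r, dist θ θ₀ < δ →
        ∀ x ∈ K, |φ r θ x - φ r θ₀ x| < ε) :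
    ∃ h : ℕ → X → ℝ, (∀ i, Continuous (h i)) ∧
      ∀ x y : X, x ≠ y → ∃ i, h i x ≠ h i y := by
  -- choose a countable dense subset of each Θ r
  have hD : ∀ r, ∃ D : Set (Fin r → ℝ), D ⊆ Θ r ∧ D.Countable ∧
      ∀ θ ∈ Θ r, ∀ δ : ℝ, 0 < δ → ∃ θ' ∈ D, dist θ' θ < δ := by
    intro r
    obtain ⟨D₀, hD₀c, hD₀d⟩ := TopologicalSpace.exists_countable_dense (Θ r)
    refine ⟨Subtype.val '' D₀, by rintro _ ⟨a, -, rfl⟩; exact a.2,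
      hD₀c.image _, ?_⟩
    intro θ hθ δ hδ
    rcases Metric.dense_iff.1 hD₀d ⟨θ, hθ⟩ δ hδ with ⟨a, haball, haD⟩
    exact ⟨a.1, ⟨a, haD, rfl⟩, by simpa [Subtype.dist_eq, dist_comm] using haball⟩
  choose D hDsub hDcount hDdense using hD
  -- the countable family of functions
  set T : Set (X → ℝ) := ⋃ r, (fun θ => φ r θ) '' (D r) with hT
  have hTc : T.Countable := Set.countable_iUnion fun r => (hDcount r).image _
  have hTne : T.Nonempty := by
    obtain ⟨θ, hθ⟩ := hΘ 0
    obtain ⟨θ', hθ'D, -⟩ := hDdense 0 θ hθ 1 one_pos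
    exact ⟨φ 0 θ', Set.mem_iUnion.2 ⟨0, ⟨θ', hθ'D, rfl⟩⟩⟩
  obtain ⟨h, hhT⟩ := hTc.exists_eq_range hTne
  refine ⟨h, ?_, ?_⟩
  · intro i
    have : h i ∈ T := hhT ▸ Set.mem_range_self i
    rcases Set.mem_iUnion.1 this with ⟨r, θ', hθ'D, hEq⟩
    exact hEq ▸ hφcont r θ' (hDsub r hθ'D)
  · intro x y hxy
    -- separate x and y by a continuous function
    obtain ⟨f, hfc, hfx, hfy⟩ := CompletelyRegularSpace.completely_regular x {y}
      isClosed_singleton (by simpa using hxy)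
    set g : X → ℝ := fun z => (f z : ℝ) with hg
    have hgc : Continuous g := continuous_subtype_val.comp hfc
    have hgx : g x = 0 := by simp [hg, hfx]
    have hgy : g y = 1 := by simp [hg, hfy rfl]
    have hKc : IsCompact ({x, y} : Set X) := Set.Finite.isCompact (by simp)
    obtain ⟨r, θ, hθ, hclose⟩ := hUAP g hgc {x, y} hKc (1/4) (by norm_num)
    have h1 : |g x - φ r θ x| < 1/4 := hclose x (by simp)
    have h2 : |g y - φ r θ y| < 1/4 := hclose y (by simp)
    obtain ⟨δ, hδ, hδclose⟩ := hparam r θ hθ {x, y} hKc (1/8) (by norm_num)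
    obtain ⟨θ', hθ'D, hθ'close⟩ := hDdense r θ hθ δ hδ
    have h3 : |φ r θ' x - φ r θ x| < 1/8 :=
      hδclose θ' (hDsub r hθ'D) hθ'close x (by simp)
    have h4 : |φ r θ' y - φ r θ y| < 1/8 :=
      hδclose θ' (hDsub r hθ'D) hθ'close y (by simp)
    have hsep : φ r θ' x ≠ φ r θ' y := by
      intro hEq
      rw [hgx] at h1; rw [hgy] at h2
      rw [abs_lt] at h1 h2 h3 h4
      linarith [h1.1, h1.2, h2.1, h2.2, h3.1, h3.2, h4.1, h4.2]
    have : φ r θ' ∈ T := Set.mem_iUnion.2 ⟨r, ⟨θ', hθ'D, rfl⟩⟩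
    rw [hhT] at this
    rcases this with ⟨i, hi⟩
    exact ⟨i, by rw [hi]; exact hsep⟩
end
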